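/- arXiv:1407.3037 — 3 statements merged into one kernel-verified Lean document; each statement's English description precedes it below -/
import Mathlib

section
/- (Fourier slice theorem, used to show T_0 = B_Φ K R and T_1 = L_Φ K R.) Let f be a Schwartz function on ℝ² and θ a unit vector in ℝ². Then the function s ↦ Rf(θ,s) is integrable on ℝ, and for every τ ∈ ℝ one has (1/√(2π)) ∫_ℝ e^{-iτs} Rf(θ,s) ds = √(2π) · f̂(τθ). -/
open MeasureTheory Real Complex

/-- The Radon transform `Rf(θ,s) = ∫_ℝ f(sθ + tθ^⊥) dt`, with `θ^⊥` the rotation of `θ`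
counterclockwise by `π/2`. -/
noncomputable def Radon (f : SchwartzMap (ℝ × ℝ) ℂ) (θ : ℝ × ℝ) (s : ℝ) : ℂ :=
  ∫ t : ℝ, f (s • θ + t • (-θ.2, θ.1))

/-- The 2D Fourier transform `f̂(ξ) = (1/(2π)) ∫_{ℝ²} e^{-ix·ξ} f(x) dx`. -/
noncomputable def fourier2 (f : SchwartzMap (ℝ × ℝ) ℂ) (ξ : ℝ × ℝ) : ℂ :=
  (1 / (2 * (π : ℂ))) *
    ∫ x : ℝ × ℝ, Complex.exp (-(Complex.I * (x.1 * ξ.1 + x.2 * ξ.2))) * f x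

/-!
Proof idea: in the coordinates `(s, t) ↦ sθ + tθ^⊥`, which form a rotation of the plane and
hence preserve Lebesgue measure, the Radon transform is the partial integral in `t`, and the
phase `x · (τθ)` of the Fourier integral becomes `τ s`. Fubini then identifies the
one-dimensional Fourier transform of `Rf(θ, ·)` with the two-dimensional integral defining
`f̂(τθ)`; the constants `1/√(2π)` and `√(2π)/(2π)` agree.
-/

namespace MeasureTheory.MeasurePreserving

variable {α β γ E : Type*} [MeasurableSpace α] [MeasurableSpace β] [MeasurableSpace γ]
  [NormedAddCommGroup E] [NormedSpace ℝ E] {μ : Measure α} {ν : Measure β} {ρ : Measure γ}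
  [SFinite ν] {e : α × β → γ} {g : γ → E}

theorem integrable_integral_comp (he : MeasurePreserving e (μ.prod ν) ρ)
    (he' : MeasurableEmbedding e) (hg : Integrable g ρ) :
    Integrable (fun a => ∫ b, g (e (a, b)) ∂ν) μ :=
  ((he.integrable_comp_emb he').2 hg).integral_prod_left

theorem integral_integral_comp [SFinite μ] (he : MeasurePreserving e (μ.prod ν) ρ)
    (he' : MeasurableEmbedding e) (hg : Integrable g ρ) :
    ∫ a, ∫ b, g (e (a, b)) ∂ν ∂μ = ∫ x, g x ∂ρ := by
  rw [integral_integral (f := fun a b => g (e (a, b))) ((he.integrable_comp_emb he').2 hg),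
    he.integral_comp he']

end MeasureTheory.MeasurePreserving

theorem LinearMap.measurePreserving_of_abs_det_eq_one {E : Type*} [NormedAddCommGroup E]
    [NormedSpace ℝ E] [MeasurableSpace E] [BorelSpace E] [FiniteDimensional ℝ E]
    (μ : Measure E) [μ.IsAddHaarMeasure] {f : E →ₗ[ℝ] E} (hf : |LinearMap.det f| = 1) :
    MeasurePreserving f μ μ := by
  have hdet : LinearMap.det f ≠ 0 := fun h => by simp [h] at hf
  refine ⟨f.continuous_of_finiteDimensional.measurable, ?_⟩
  rw [Measure.map_linearMap_addHaar_eq_smul_addHaar μ hdet, abs_inv, hf]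
  simp

theorem integrable_exp_neg_I_mul_ofReal_mul {α : Type*} [MeasurableSpace α] {μ : Measure α}
    {φ : α → ℝ} (hφ : Measurable φ) {g : α → ℂ} (hg : Integrable g μ) :
    Integrable (fun x => Complex.exp (-(Complex.I * φ x)) * g x) μ := by
  refine hg.bdd_mul (c := 1) (by fun_prop) (Filter.Eventually.of_forall fun x => ?_)
  simp [norm_exp]

noncomputable def unitFrame (θ : ℝ × ℝ) (hθ : θ.1 ^ 2 + θ.2 ^ 2 = 1) :
    (ℝ × ℝ) ≃ₗ[ℝ] (ℝ × ℝ) where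
  toFun p := p.1 • θ + p.2 • (-θ.2, θ.1)
  invFun x := (x.1 * θ.1 + x.2 * θ.2, -x.1 * θ.2 + x.2 * θ.1)
  map_add' p q := by simp only [Prod.fst_add, Prod.snd_add]; module
  map_smul' c p := by
    simp only [Prod.smul_fst, Prod.smul_snd, smul_eq_mul, RingHom.id_apply]
    module
  left_inv p := by
    ext <;> simp only [Prod.fst_add, Prod.snd_add, Prod.smul_fst, Prod.smul_snd, smul_eq_mul]
    · linear_combination p.1 * hθ
    · linear_combination p.2 * hθ
  right_inv x := by
    ext <;> simp only [Prod.fst_add, Prod.snd_add, Prod.smul_fst, Prod.smul_snd, smul_eq_mul]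
    · linear_combination x.1 * hθ
    · linear_combination x.2 * hθ

section unitFrame

variable (θ : ℝ × ℝ) (hθ : θ.1 ^ 2 + θ.2 ^ 2 = 1)

theorem unitFrame_apply (p : ℝ × ℝ) :
    unitFrame θ hθ p = p.1 • θ + p.2 • (-θ.2, θ.1) :=
  rfl

theorem unitFrame_eq_toLin : (unitFrame θ hθ : (ℝ × ℝ) →ₗ[ℝ] (ℝ × ℝ)) =
    Matrix.toLin (Module.Basis.finTwoProd ℝ) (Module.Basis.finTwoProd ℝ)
      !![θ.1, -θ.2; θ.2, θ.1] := by
  ext <;> simp [unitFrame_apply]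

theorem det_unitFrame : LinearMap.det (unitFrame θ hθ : (ℝ × ℝ) →ₗ[ℝ] (ℝ × ℝ)) = 1 := by
  rw [unitFrame_eq_toLin, LinearMap.det_toLin, Matrix.det_fin_two_of]
  linear_combination hθ

theorem measurePreserving_unitFrame : MeasurePreserving (unitFrame θ hθ) volume volume :=
  LinearMap.measurePreserving_of_abs_det_eq_one volume (by rw [det_unitFrame, abs_one])

theorem unitFrame_dot_smul (τ : ℝ) (p : ℝ × ℝ) :
    (unitFrame θ hθ p).1 * (τ • θ).1 + (unitFrame θ hθ p).2 * (τ • θ).2 = τ * p.1 := by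
  simp only [unitFrame_apply, Prod.fst_add, Prod.snd_add, Prod.smul_fst, Prod.smul_snd,
    smul_eq_mul]
  linear_combination τ * p.1 * hθ

end unitFrame

theorem one_div_sqrt_two_pi_eq :
    (1 / (Real.sqrt (2 * π) : ℂ)) = Real.sqrt (2 * π) * (1 / (2 * π)) := by
  have h : 1 / √(2 * π) = √(2 * π) * (1 / (2 * π)) := by rw [← sqrt_div_self', mul_one_div]
  exact_mod_cast h

/-- Fourier slice theorem: for Schwartz `f` and a unit vector `θ`, the function
`s ↦ Rf(θ,s)` is integrable, and
`(1/√(2π)) ∫_ℝ e^{-iτs} Rf(θ,s) ds = √(2π) · f̂(τθ)` for every `τ`. -/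
theorem stmt_0 (f : SchwartzMap (ℝ × ℝ) ℂ) (θ : ℝ × ℝ) (hθ : θ.1 ^ 2 + θ.2 ^ 2 = 1) :
    Integrable (fun s : ℝ => Radon f θ s) ∧
    ∀ τ : ℝ,
      (1 / (Real.sqrt (2 * π) : ℂ)) *
          ∫ s : ℝ, Complex.exp (-(Complex.I * τ * s)) * Radon f θ s
        = (Real.sqrt (2 * π) : ℂ) * fourier2 f (τ • θ) := by
  set e := unitFrame θ hθ
  have hmp : MeasurePreserving e (volume.prod volume) volume :=
    measurePreserving_unitFrame θ hθ
  have hemb : MeasurableEmbedding e := e.toContinuousLinearEquiv.toHomeomorph.measurableEmbedding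
  have hradon (s : ℝ) : Radon f θ s = ∫ t, f (e (s, t)) := rfl
  refine ⟨hmp.integrable_integral_comp hemb f.integrable, fun τ => ?_⟩
  set G : ℝ × ℝ → ℂ := fun x =>
    Complex.exp (-(Complex.I * (x.1 * (τ • θ).1 + x.2 * (τ • θ).2))) * f x
  have hG : Integrable G := by
    simpa only [G, ofReal_add, ofReal_mul] using integrable_exp_neg_I_mul_ofReal_mul
      (φ := fun x : ℝ × ℝ => x.1 * (τ • θ).1 + x.2 * (τ • θ).2) (by fun_prop) f.integrable
  have hslice : ∫ s : ℝ, Complex.exp (-(Complex.I * τ * s)) * Radon f θ s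
      = ∫ s, ∫ t, G (e (s, t)) := by
    congr 1 with s
    rw [hradon, ← integral_const_mul]
    congr 1 with t
    simp only [G]
    rw [← ofReal_mul, ← ofReal_mul, ← ofReal_add, unitFrame_dot_smul, ofReal_mul, mul_assoc]
  rw [hslice, hmp.integral_integral_comp hemb hG, fourier2, one_div_sqrt_two_pi_eq]
  ring
end

section
/- (Decay of one-sided oscillatory integrals with amplitude vanishing to order k at 0.) Let g : ℝ → ℂ be smooth with compact support and let k be a natural number such that g^{(l)}(0) = 0 for all 0 ≤ l ≤ k-1. Then there exists a constant C such that for all c ∈ ℝ, | ∫_0^∞ e^{icτ} g(τ) dτ | ≤ C (1 + |c|)^{-(k+1)}. -/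
/-!
Integrating by parts on `[0, ∞)` trades a factor `i c` for a derivative of the amplitude, at the
cost of the boundary term `g(0)` (the term at infinity vanishes by compact support). Because
`g, g', …, g^{(k-1)}` vanish at `0`, doing this `k + 1` times shows that `|c|^{k+1}` times the
integral is bounded by `|g^{(k)}(0)| + ∫_0^∞ |g^{(k+1)}|`, uniformly in `c`. Together with the
trivial bound `∫_0^∞ |g|` this gives decay like `(1 + |c|)^{-(k+1)}`.
-/

open MeasureTheory Real Complex

noncomputable def oscIntegral (c : ℝ) (h : ℝ → ℂ) : ℂ :=
  ∫ τ in Set.Ioi (0 : ℝ), exp (I * c * τ) * h τ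

lemma norm_oscIntegral_le (c : ℝ) (h : ℝ → ℂ) :
    ‖oscIntegral c h‖ ≤ ∫ τ in Set.Ioi (0 : ℝ), ‖h τ‖ := by
  refine (norm_integral_le_integral_norm _).trans_eq ?_
  simp [norm_exp]

lemma hasDerivAt_exp_I_mul (c x : ℝ) :
    HasDerivAt (fun τ : ℝ => exp (I * c * τ)) (I * c * exp (I * c * x)) x := by
  simpa [mul_comm] using ((hasDerivAt_id x).ofReal_comp.const_mul (I * c)).cexp

lemma oscIntegral_deriv {h : ℝ → ℂ} (hh : ContDiff ℝ 1 h) (hc : HasCompactSupport h) (c : ℝ) :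
    oscIntegral c (deriv h) = -h 0 - I * c * oscIntegral c h := by
  have hderiv : ∀ x : ℝ, HasDerivAt (fun τ : ℝ => exp (I * c * τ) * h τ)
      (I * c * (exp (I * c * x) * h x) + exp (I * c * x) * deriv h x) x := fun x =>
    ((hasDerivAt_exp_I_mul c x).mul (hh.differentiable one_ne_zero x).hasDerivAt).congr_deriv
      (by ring)
  have hprod : ContDiff ℝ 1 (fun τ : ℝ => exp (I * c * τ) * h τ) :=
    (contDiff_const.mul ofRealCLM.contDiff).cexp.mul hh
  have hint : Integrable (fun τ : ℝ => exp (I * c * τ) * h τ) :=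
    hprod.continuous.integrable_of_hasCompactSupport hc.mul_left
  have hint' : Integrable (fun τ : ℝ => exp (I * c * τ) * deriv h τ) :=
    (by fun_prop : Continuous fun τ : ℝ => exp (I * c * τ)).mul (hh.continuous_deriv le_rfl)
      |>.integrable_of_hasCompactSupport hc.deriv.mul_left
  have hftc := hc.mul_left.integral_Ioi_deriv_eq hprod 0
  simp only [fun x => (hderiv x).deriv] at hftc
  rw [integral_add (hint.const_mul _).integrableOn hint'.integrableOn, integral_const_mul] at hftc
  simp only [ofReal_zero, mul_zero, Complex.exp_zero, one_mul] at hftc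
  unfold oscIntegral
  linear_combination hftc

lemma I_mul_pow_mul_oscIntegral {k : ℕ} {h : ℝ → ℂ} (hh : ContDiff ℝ (k + 1) h)
    (hc : HasCompactSupport h) (hvan : ∀ l < k, iteratedDeriv l h 0 = 0) (c : ℝ) :
    (I * c) ^ (k + 1) * oscIntegral c h =
      (-1) ^ (k + 1) * (iteratedDeriv k h 0 + oscIntegral c (iteratedDeriv (k + 1) h)) := by
  induction k generalizing h with
  | zero =>
    simp only [zero_add, pow_one, iteratedDeriv_zero, iteratedDeriv_one]
    linear_combination oscIntegral_deriv (by simpa using hh) hc c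
  | succ k ih =>
    have hh1 : ContDiff ℝ 1 h := hh.of_le (by norm_cast; omega)
    have h0 : h 0 = 0 := by simpa using hvan 0 k.succ_pos
    have hvan' : ∀ l < k, iteratedDeriv l (deriv h) 0 = 0 := fun l hl => by
      rw [← iteratedDeriv_succ']; exact hvan (l + 1) (by omega)
    have hderiv := ih (by simpa using hh.deriv' (n := k + 1)) hc.deriv hvan'
    rw [← iteratedDeriv_succ', ← iteratedDeriv_succ'] at hderiv
    calc (I * c) ^ (k + 1 + 1) * oscIntegral c h
        = -((I * c) ^ (k + 1) * oscIntegral c (deriv h)) := by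
          rw [oscIntegral_deriv hh1 hc, h0]; ring
      _ = _ := by rw [hderiv]; ring

lemma le_mul_inv_one_add_abs_pow {x A B c : ℝ} {n : ℕ} (hx : 0 ≤ x) (hxA : x ≤ A)
    (hxB : |c| ^ (n + 1) * x ≤ B) : x ≤ 2 ^ n * (A + B) * ((1 + |c|) ^ (n + 1))⁻¹ := by
  rw [← div_eq_mul_inv, le_div_iff₀ (by positivity)]
  calc x * (1 + |c|) ^ (n + 1) ≤ x * (2 ^ n * (1 ^ (n + 1) + |c| ^ (n + 1))) :=
        mul_le_mul_of_nonneg_left (add_pow_le zero_le_one (abs_nonneg c) (n + 1)) hx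
    _ = 2 ^ n * (x + |c| ^ (n + 1) * x) := by ring
    _ ≤ 2 ^ n * (A + B) := by gcongr

/-- Decay of one-sided oscillatory integrals with amplitude vanishing to order `k` at `0`:
if `g` is smooth, compactly supported and `g^{(l)}(0) = 0` for `0 ≤ l ≤ k-1`, then
`|∫_0^∞ e^{icτ} g(τ) dτ| ≤ C (1+|c|)^{-(k+1)}`. -/
theorem stmt_7 (g : ℝ → ℂ) (hg : ContDiff ℝ (⊤ : ℕ∞) g) (hgc : HasCompactSupport g)
    (k : ℕ) (hvan : ∀ l < k, iteratedDeriv l g 0 = 0) :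
    ∃ C : ℝ, ∀ c : ℝ,
      ‖∫ τ in Set.Ioi (0 : ℝ), Complex.exp (Complex.I * c * τ) * g τ‖
        ≤ C * ((1 + |c|) ^ (k + 1))⁻¹ := by
  refine ⟨2 ^ k * ((∫ τ in Set.Ioi (0 : ℝ), ‖g τ‖) +
    (‖iteratedDeriv k g 0‖ + ∫ τ in Set.Ioi (0 : ℝ), ‖iteratedDeriv (k + 1) g τ‖)), fun c => ?_⟩
  refine le_mul_inv_one_add_abs_pow (norm_nonneg _) (norm_oscIntegral_le c g) ?_
  calc |c| ^ (k + 1) * ‖oscIntegral c g‖ = ‖(I * c) ^ (k + 1) * oscIntegral c g‖ := by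
        simp [norm_pow]
    _ = ‖iteratedDeriv k g 0 + oscIntegral c (iteratedDeriv (k + 1) g)‖ := by
        rw [I_mul_pow_mul_oscIntegral (hg.of_le (by exact_mod_cast le_top)) hgc hvan, norm_mul]
        simp
    _ ≤ _ := (norm_add_le _ _).trans (by gcongr; exact norm_oscIntegral_le c _)
end

section
/- (Symbol estimates for one-sided oscillatory integrals: the remainder term r_+ lies in S^0, with improvement from vanishing of the amplitude.) Let g : ℝ → ℂ be smooth with compact support and let k be a natural number such that g^{(l)}(0) = 0 for all 0 ≤ l ≤ k-1. Define r(c) = ∫_0^∞ e^{icτ} g(τ) dτ. Then r is smooth on ℝ with r^{(n)}(c) = ∫_0^∞ (iτ)^n e^{icτ} g(τ) dτ, and for every natural number n there is a constant C_n such that |r^{(n)}(c)| ≤ C_n (1 + |c|)^{-(k+n+1)} for all c ∈ ℝ. -/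
/-!
Differentiating under the integral sign, `r⁽ⁿ⁾` is the one-sided oscillatory integral of
`hₙ τ = (iτ)ⁿ g τ`, again smooth with compact support, and by Leibniz vanishing to order `k + n`
at `0`. Integration by parts on `[0, ∞)` gives `-(ic) ∫ e^{icτ} h = h 0 + ∫ e^{icτ} h'`; iterating
it `k + n + 1` times, all boundary terms but the last vanish, so
`|c|^{k+n+1} |r⁽ⁿ⁾ c| ≤ |hₙ^{(k+n)} 0| + ‖hₙ^{(k+n+1)}‖₁`. Together with the trivial bound
`|r⁽ⁿ⁾ c| ≤ ‖hₙ‖₁` this is the decay in `1 + |c|`.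
-/

open MeasureTheory Real Complex Set Filter

open scoped ContDiff

theorem HasCompactSupport.iteratedDeriv {𝕜 F : Type*} [NontriviallyNormedField 𝕜]
    [NormedAddCommGroup F] [NormedSpace 𝕜 F] {f : 𝕜 → F} (hf : HasCompactSupport f) (n : ℕ) :
    HasCompactSupport (iteratedDeriv n f) := by
  induction n with
  | zero => simpa using hf
  | succ n ih => simpa only [iteratedDeriv_succ] using ih.deriv

theorem iteratedDeriv_mul_eq_zero_of_lt_add {𝕜 𝔸 : Type*} [NontriviallyNormedField 𝕜]
    [NormedRing 𝔸] [NormedAlgebra 𝕜 𝔸] {f g : 𝕜 → 𝔸} {x : 𝕜} {a b j : ℕ}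
    (hf : ContDiffAt 𝕜 j f x) (hg : ContDiffAt 𝕜 j g x)
    (hfa : ∀ i < a, iteratedDeriv i f x = 0) (hgb : ∀ i < b, iteratedDeriv i g x = 0)
    (hj : j < a + b) :
    iteratedDeriv j (fun y => f y * g y) x = 0 := by
  rw [iteratedDeriv_fun_mul hf hg]
  refine Finset.sum_eq_zero fun i hi => ?_
  have hij : i ≤ j := Nat.lt_succ_iff.mp (Finset.mem_range.mp hi)
  rcases lt_or_ge i a with hia | hia
  · simp [hfa i hia]
  · simp [hgb (j - i) (by omega)]

noncomputable def oscInt (h : ℝ → ℂ) (c : ℝ) : ℂ :=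
  ∫ τ in Ioi (0 : ℝ), exp (I * c * τ) * h τ

section OscInt

variable {h : ℝ → ℂ}

theorem norm_exp_I_mul_ofReal_mul_ofReal (c τ : ℝ) : ‖exp (I * c * τ)‖ = 1 := by
  simpa [mul_comm, mul_left_comm] using norm_exp_ofReal_mul_I (c * τ)

theorem integrableOn_exp_mul (hh : Continuous h) (hc : HasCompactSupport h) (c : ℝ) :
    IntegrableOn (fun τ : ℝ => exp (I * c * τ) * h τ) (Ioi 0) :=
  ((by fun_prop : Continuous fun τ : ℝ => exp (I * c * τ) * h τ).integrable_of_hasCompactSupport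
    hc.mul_left).integrableOn

theorem norm_oscInt_le (c : ℝ) : ‖oscInt h c‖ ≤ ∫ τ in Ioi (0 : ℝ), ‖h τ‖ :=
  (norm_integral_le_integral_norm _).trans_eq <|
    integral_congr_ae <| ae_of_all _ fun τ => by
      simp only [norm_mul, norm_exp_I_mul_ofReal_mul_ofReal, one_mul]

theorem hasDerivAt_exp_I_mul_mul (c τ : ℝ) :
    HasDerivAt (fun x : ℝ => exp (I * x * τ)) (I * τ * exp (I * c * τ)) c := by
  have := (((ofRealCLM.hasDerivAt (x := c)).const_mul I).mul_const (τ : ℂ)).cexp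
  simpa [mul_comm, mul_left_comm] using this

theorem hasDerivAt_oscInt (hh : Continuous h) (hc : HasCompactSupport h) (c : ℝ) :
    HasDerivAt (oscInt h) (oscInt (fun τ => I * τ * h τ) c) c := by
  unfold oscInt
  refine (hasDerivAt_integral_of_dominated_loc_of_deriv_le (bound := fun τ => |τ| * ‖h τ‖)
    (F' := fun x τ => exp (I * x * τ) * (I * τ * h τ)) (Metric.ball_mem_nhds c one_pos)
    (Eventually.of_forall fun x => (integrableOn_exp_mul hh hc x).aestronglyMeasurable)
    (integrableOn_exp_mul hh hc c)
    (integrableOn_exp_mul (by fun_prop) hc.mul_left c).aestronglyMeasurable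
    (ae_of_all _ fun τ x _ => ?_) ?_ (ae_of_all _ fun τ x _ => ?_)).2
  · simp [norm_exp_I_mul_ofReal_mul_ofReal]
  · exact ((by fun_prop : Continuous fun τ : ℝ => |τ| * ‖h τ‖).integrable_of_hasCompactSupport
      hc.norm.mul_left).integrableOn
  · exact ((hasDerivAt_exp_I_mul_mul x τ).mul_const (h τ)).congr_deriv (by ring)

theorem iteratedDeriv_oscInt (hh : Continuous h) (hc : HasCompactSupport h) (n : ℕ) :
    iteratedDeriv n (oscInt h) = oscInt (fun τ => (I * τ) ^ n * h τ) := by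
  induction n with
  | zero => simp
  | succ n ih =>
    ext c
    rw [iteratedDeriv_succ, ih,
      (hasDerivAt_oscInt (h := fun τ => (I * τ) ^ n * h τ) (by fun_prop) hc.mul_left c).deriv]
    simp only [pow_succ', mul_assoc]

theorem contDiff_oscInt (hh : Continuous h) (hc : HasCompactSupport h) :
    ContDiff ℝ (⊤ : ℕ∞) (oscInt h) :=
  contDiff_of_differentiable_iteratedDeriv fun n _ c => by
    rw [iteratedDeriv_oscInt hh hc]
    exact (hasDerivAt_oscInt (h := fun τ => (I * τ) ^ n * h τ) (by fun_prop) hc.mul_left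
      c).differentiableAt

theorem neg_I_mul_mul_oscInt (hh : ContDiff ℝ 1 h) (hc : HasCompactSupport h) (c : ℝ) :
    -(I * c) * oscInt h c = h 0 + oscInt (deriv h) c := by
  let F : ℝ → ℂ := fun τ => exp (I * c * τ) * h τ
  have hF : ∀ τ : ℝ, HasDerivAt F (I * c * F τ + exp (I * c * τ) * deriv h τ) τ := fun τ => by
    have := hasDerivAt_exp_I_mul_mul τ c
    simp only [mul_right_comm I _ (c : ℂ)] at this
    exact (this.mul (hh.differentiable one_ne_zero τ).hasDerivAt).congr_deriv (by ring)
  have hofReal : ContDiff ℝ 1 fun τ : ℝ => (τ : ℂ) := ofRealCLM.contDiff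
  have hFT := hc.mul_left.integral_Ioi_deriv_eq (f := F) (by fun_prop) 0
  simp only [fun τ => (hF τ).deriv] at hFT
  rw [integral_add ((integrableOn_exp_mul hh.continuous hc c).const_mul _)
    (integrableOn_exp_mul (hh.continuous_deriv le_rfl) hc.deriv c), integral_const_mul] at hFT
  simp only [F, ofReal_zero, mul_zero, Complex.exp_zero, one_mul] at hFT
  unfold oscInt
  linear_combination -hFT

theorem pow_neg_I_mul_mul_oscInt {m : ℕ} (hh : ContDiff ℝ m h) (hc : HasCompactSupport h)
    (hv : ∀ j < m, iteratedDeriv j h 0 = 0) (c : ℝ) :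
    (-(I * c)) ^ m * oscInt h c = oscInt (iteratedDeriv m h) c := by
  induction m with
  | zero => simp
  | succ m ih =>
    have hm := contDiff_nat_succ_iff_contDiff_one_iteratedDeriv.mp hh
    rw [pow_succ', mul_assoc, ih hm.1 fun j hj => hv j (by omega),
      neg_I_mul_mul_oscInt hm.2 (hc.iteratedDeriv m), hv m (by omega), zero_add,
      iteratedDeriv_succ]

theorem abs_pow_mul_norm_oscInt_le {m : ℕ} (hh : ContDiff ℝ (m + 1) h)
    (hc : HasCompactSupport h) (hv : ∀ j < m, iteratedDeriv j h 0 = 0) (c : ℝ) :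
    |c| ^ (m + 1) * ‖oscInt h c‖ ≤
      ‖iteratedDeriv m h 0‖ + ∫ τ in Ioi (0 : ℝ), ‖iteratedDeriv (m + 1) h τ‖ := by
  have hm := contDiff_nat_succ_iff_contDiff_one_iteratedDeriv.mp hh
  have key : (-(I * c)) ^ (m + 1) * oscInt h c =
      iteratedDeriv m h 0 + oscInt (iteratedDeriv (m + 1) h) c := by
    rw [pow_succ', mul_assoc, pow_neg_I_mul_mul_oscInt hm.1 hc hv,
      neg_I_mul_mul_oscInt hm.2 (hc.iteratedDeriv m), iteratedDeriv_succ]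
  calc |c| ^ (m + 1) * ‖oscInt h c‖ = ‖(-(I * c)) ^ (m + 1) * oscInt h c‖ := by
        simp
    _ ≤ _ := by
      rw [key]
      refine (norm_add_le _ _).trans ?_
      gcongr
      exact norm_oscInt_le c

end OscInt

theorem pow_one_add_mul_le {t y A B : ℝ} (ht : 0 ≤ t) (hy : 0 ≤ y) (m : ℕ) (hB : y ≤ B)
    (hA : t ^ m * y ≤ A) : (1 + t) ^ m * y ≤ 2 ^ m * max A B := by
  rcases le_total t 1 with ht1 | ht1
  · calc (1 + t) ^ m * y ≤ 2 ^ m * B := by gcongr; linarith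
      _ ≤ 2 ^ m * max A B := by gcongr; exact le_max_right A B
  · calc (1 + t) ^ m * y ≤ (2 * t) ^ m * y := by gcongr; linarith
      _ = 2 ^ m * (t ^ m * y) := by ring
      _ ≤ 2 ^ m * max A B := by gcongr; exact hA.trans (le_max_left A B)

theorem iteratedDeriv_I_mul_pow_mul_eq_zero {g : ℝ → ℂ} {k : ℕ} (n : ℕ)
    (hg : ContDiff ℝ (k + n) g) (hvan : ∀ l < k, iteratedDeriv l g 0 = 0) :
    ∀ j < k + n, iteratedDeriv j (fun τ : ℝ => (I * τ) ^ n * g τ) 0 = 0 := by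
  induction n with
  | zero => simpa using hvan
  | succ n ih =>
    intro j hj
    have hofReal : ContDiff ℝ j fun τ : ℝ => (τ : ℂ) := ofRealCLM.contDiff
    have hgj : ContDiff ℝ j g := hg.of_le (by exact_mod_cast hj.le)
    rw [show (fun τ : ℝ => (I * τ) ^ (n + 1) * g τ) = fun τ => I * τ * ((I * τ) ^ n * g τ) by
      ext; ring]
    refine iteratedDeriv_mul_eq_zero_of_lt_add (a := 1) (b := k + n) (by fun_prop) (by fun_prop)
      (fun i hi => by simp [Nat.lt_one_iff.mp hi]) (ih (hg.of_le (by norm_cast; omega))) (by omega)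

/-- Symbol estimates for one-sided oscillatory integrals: with `g` smooth, compactly
supported, vanishing to order `k` at `0`, the function `r(c) = ∫_0^∞ e^{icτ} g(τ) dτ`
is smooth, `r^{(n)}(c) = ∫_0^∞ (iτ)^n e^{icτ} g(τ) dτ`, and
`|r^{(n)}(c)| ≤ C_n (1+|c|)^{-(k+n+1)}`. -/
theorem stmt_9 (g : ℝ → ℂ) (hg : ContDiff ℝ (⊤ : ℕ∞) g) (hgc : HasCompactSupport g)
    (k : ℕ) (hvan : ∀ l < k, iteratedDeriv l g 0 = 0)
    (r : ℝ → ℂ)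
    (hr : r = fun c : ℝ => ∫ τ in Set.Ioi (0 : ℝ), Complex.exp (Complex.I * c * τ) * g τ) :
    ContDiff ℝ (⊤ : ℕ∞) r ∧
    (∀ (n : ℕ) (c : ℝ),
      iteratedDeriv n r c
        = ∫ τ in Set.Ioi (0 : ℝ), (Complex.I * τ) ^ n * Complex.exp (Complex.I * c * τ) * g τ) ∧
    (∀ n : ℕ, ∃ C : ℝ, ∀ c : ℝ,
      ‖iteratedDeriv n r c‖ ≤ C * ((1 + |c|) ^ (k + n + 1))⁻¹) := by
  obtain rfl : r = oscInt g := hr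
  have hofReal : ContDiff ℝ ∞ fun τ : ℝ => (τ : ℂ) := ofRealCLM.contDiff
  refine ⟨contDiff_oscInt hg.continuous hgc, fun n c => ?_, fun n => ?_⟩
  · rw [iteratedDeriv_oscInt hg.continuous hgc]
    exact integral_congr_ae (ae_of_all _ fun τ => by ring)
  · set h := fun τ : ℝ => (I * τ) ^ n * g τ
    have hh : ContDiff ℝ ∞ h := by fun_prop
    refine ⟨2 ^ (k + n + 1) * max
      (‖iteratedDeriv (k + n) h 0‖ + ∫ τ in Ioi (0 : ℝ), ‖iteratedDeriv (k + n + 1) h τ‖)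
      (∫ τ in Ioi (0 : ℝ), ‖h τ‖), fun c => ?_⟩
    rw [iteratedDeriv_oscInt hg.continuous hgc, le_mul_inv_iff₀ (by positivity), mul_comm]
    exact pow_one_add_mul_le (abs_nonneg c) (norm_nonneg _) _ (norm_oscInt_le c)
      (abs_pow_mul_norm_oscInt_le (hh.of_le (by exact_mod_cast le_top)) hgc.mul_left
        (iteratedDeriv_I_mul_pow_mul_eq_zero n (hg.of_le (by exact_mod_cast le_top)) hvan) c)
end
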